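/- arXiv:math-ph/0103009 — 3 statements merged into one kernel-verified Lean document; each statement's English description precedes it below -/
import Mathlib

section
/- Let ρ = (ρ_m)_m be a sequence of nonnegative integrable functions on ℝ satisfying the DSTF Thomas–Fermi equations with zero chemical potential: for every m ∈ ℕ and almost every z, 3κ ρ_m(z)² = [ Z V_m(z) − Σ_n ∫ V_{m,n}(z − z') ρ_n(z') dz' ]_+ (the equation satisfied by the unconstrained DSTF minimizer, with total mass N_c = Σ_m ∫ ρ_m). Then N_c = Σ_m ∫ ρ_m ≤ 4Z. -/
open MeasureTheory Real ENNReal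

noncomputable section

/-- Squared modulus `|φ_m(x⊥)|²` of the lowest Landau band function with angular
momentum `-m` and magnetic field strength `B`. -/
def phiSq (B : ℝ) (m : ℕ) (xp : ℝ × ℝ) : ℝ :=
  B / (2 * π) * (1 / (Nat.factorial m : ℝ)) * (B * (xp.1 ^ 2 + xp.2 ^ 2) / 2) ^ m *
    Real.exp (-(B * (xp.1 ^ 2 + xp.2 ^ 2)) / 2)

/-- `|x|` for `x = (x⊥, z) ∈ ℝ² × ℝ`. -/
def normx (xp : ℝ × ℝ) (z : ℝ) : ℝ := Real.sqrt (xp.1 ^ 2 + xp.2 ^ 2 + z ^ 2)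

/-- `V_m(z) = ∫ |φ_m(x⊥)|² / |(x⊥,z)| dx⊥`. -/
def Vm (B : ℝ) (m : ℕ) (z : ℝ) : ℝ := ∫ xp : ℝ × ℝ, phiSq B m xp / normx xp z

/-- `V_{m,n}(w) = ∬ |φ_m(x⊥)|²|φ_n(x⊥')|²/|(x⊥ - x⊥', w)| dx⊥ dx⊥'`. -/
def Vmn (B : ℝ) (m n : ℕ) (w : ℝ) : ℝ :=
  ∫ xp : ℝ × ℝ, ∫ yp : ℝ × ℝ,
    phiSq B m xp * phiSq B n yp / normx (xp.1 - yp.1, xp.2 - yp.2) w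

/-- `κ = π²/3`. -/
def kappa : ℝ := π ^ 2 / 3

/-- Repulsion energy `D̄(ρ,ρ)` of a sequence of one-dimensional densities. -/
def Dbar (B : ℝ) (ρ : ℕ → ℝ → ℝ) : ℝ :=
  (1 / 2) * ∑' m : ℕ, ∑' n : ℕ, ∫ z : ℝ, ∫ z' : ℝ, Vmn B m n (z - z') * ρ m z * ρ n z'

/-- The DSTF functional. -/
def EDSTF (B Z : ℝ) (ρ : ℕ → ℝ → ℝ) : ℝ :=
  (∑' m : ℕ, (kappa * ∫ z : ℝ, ρ m z ^ 3 - Z * ∫ z : ℝ, Vm B m z * ρ m z)) + Dbar B ρ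

/-- The domain `D` of the DSTF functional: sequences of nonnegative measurable
functions with `Σ_m ∫ρ_m³ < ∞`, `Σ_m ∫ V_m ρ_m < ∞` and `D̄(ρ,ρ) < ∞`. -/
structure MemD (B : ℝ) (ρ : ℕ → ℝ → ℝ) : Prop where
  meas : ∀ m, Measurable (ρ m)
  nonneg : ∀ m z, 0 ≤ ρ m z
  cube_int : ∀ m, Integrable (fun z => ρ m z ^ 3)
  cube_sum : Summable (fun m => ∫ z : ℝ, ρ m z ^ 3)
  pot_int : ∀ m, Integrable (fun z => Vm B m z * ρ m z)
  pot_sum : Summable (fun m => ∫ z : ℝ, Vm B m z * ρ m z)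
  rep_int : ∀ m n, Integrable (fun p : ℝ × ℝ => Vmn B m n (p.1 - p.2) * ρ m p.1 * ρ n p.2)
  rep_sum : Summable (fun p : ℕ × ℕ =>
    ∫ z : ℝ, ∫ z' : ℝ, Vmn B p.1 p.2 (z - z') * ρ p.1 z * ρ p.2 z')

/-- Total particle number `Σ_m ∫ ρ_m` of a sequence of 1D densities. -/
def massD (ρ : ℕ → ℝ → ℝ) : ℝ := ∑' m : ℕ, ∫ z : ℝ, ρ m z

/-- The particle number of `ρ` is a well-defined (finite) quantity. -/
def HasMass (ρ : ℕ → ℝ → ℝ) : Prop :=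
  (∀ m, Integrable (ρ m)) ∧ Summable (fun m => ∫ z : ℝ, ρ m z)

/-- The DSTF ground state energy `E^DSTF(N,Z,B)` with particle number at most `N`. -/
def EDSTFinf (N Z B : ℝ) : ℝ :=
  sInf { e | ∃ ρ, MemD B ρ ∧ HasMass ρ ∧ massD ρ ≤ N ∧ e = EDSTF B Z ρ }

/-- Indicator `χ_m` of the annulus `√(2m/B) ≤ |x⊥| ≤ √(2(m+1)/B)`. -/
def chiA (B : ℝ) (m : ℕ) (xp : ℝ × ℝ) : ℝ :=
  if Real.sqrt (2 * m / B) ≤ Real.sqrt (xp.1 ^ 2 + xp.2 ^ 2) ∧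
      Real.sqrt (xp.1 ^ 2 + xp.2 ^ 2) ≤ Real.sqrt (2 * (m + 1) / B) then 1 else 0

/-- `Ṽ(x) = Σ_m χ_m(x⊥) V_m(z)`. -/
def Vtilde (B : ℝ) (x : (ℝ × ℝ) × ℝ) : ℝ := ∑' m : ℕ, chiA B m x.1 * Vm B m x.2

/-- The modified repulsion energy `D̃(ρ,ρ)` for a three-dimensional density. -/
def Dtilde (B : ℝ) (ρ : (ℝ × ℝ) × ℝ → ℝ) : ℝ :=
  (1 / 2) * ∑' m : ℕ, ∑' n : ℕ, ∫ x : (ℝ × ℝ) × ℝ, ∫ y : (ℝ × ℝ) × ℝ,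
    Vmn B m n (x.2 - y.2) * chiA B m x.1 * chiA B n y.1 * ρ x * ρ y

/-- The MSTF functional. -/
def EMSTF (B Z : ℝ) (ρ : (ℝ × ℝ) × ℝ → ℝ) : ℝ :=
  4 * π ^ 4 / (3 * B ^ 2) * (∫ x : (ℝ × ℝ) × ℝ, ρ x ^ 3)
    - Z * (∫ x : (ℝ × ℝ) × ℝ, Vtilde B x * ρ x) + Dtilde B ρ

/-- The domain `D̃` of the MSTF functional. -/
structure MemDt (B : ℝ) (ρ : (ℝ × ℝ) × ℝ → ℝ) : Prop where
  meas : Measurable ρ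
  nonneg : ∀ x, 0 ≤ ρ x
  lp3 : MemLp ρ 3 (volume : Measure ((ℝ × ℝ) × ℝ))
  pot_int : Integrable (fun x : (ℝ × ℝ) × ℝ => Vtilde B x * ρ x)
  rep_int : ∀ m n, Integrable (fun p : ((ℝ × ℝ) × ℝ) × ((ℝ × ℝ) × ℝ) =>
    Vmn B m n (p.1.2 - p.2.2) * chiA B m p.1.1 * chiA B n p.2.1 * ρ p.1 * ρ p.2)
  rep_sum : Summable (fun p : ℕ × ℕ => ∫ x : (ℝ × ℝ) × ℝ, ∫ y : (ℝ × ℝ) × ℝ,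
    Vmn B p.1 p.2 (x.2 - y.2) * chiA B p.1 x.1 * chiA B p.2 y.1 * ρ x * ρ y)

/-- The MSTF ground state energy `E^MSTF(N,Z,B)` with particle number at most `N`. -/
def EMSTFinf (N Z B : ℝ) : ℝ :=
  sInf { e | ∃ ρ, MemDt B ρ ∧ Integrable ρ ∧ (∫ x : (ℝ × ℝ) × ℝ, ρ x) ≤ N ∧ e = EMSTF B Z ρ }

/-- The one-dimensional DSTF functional (angular momentum channel `m = 0`). -/
def E1DSTF (B Z : ℝ) (ρ : ℝ → ℝ) : ℝ :=
  kappa * (∫ z : ℝ, ρ z ^ 3) - Z * (∫ z : ℝ, Vm B 0 z * ρ z)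
    + (1 / 2) * ∫ z : ℝ, ∫ z' : ℝ, Vmn B 0 0 (z - z') * ρ z * ρ z'

/-- The one-dimensional functional without the repulsion term. -/
def E1Dw (B Z : ℝ) (ρ : ℝ → ℝ) : ℝ :=
  kappa * (∫ z : ℝ, ρ z ^ 3) - Z * (∫ z : ℝ, Vm B 0 z * ρ z)

/-- Admissible densities for the 1D theory: all three terms of the functional finite. -/
structure Adm1 (B : ℝ) (ρ : ℝ → ℝ) : Prop where
  meas : Measurable ρ
  nonneg : ∀ z, 0 ≤ ρ z
  cube_int : Integrable (fun z => ρ z ^ 3)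
  pot_int : Integrable (fun z => Vm B 0 z * ρ z)
  rep_int : Integrable (fun p : ℝ × ℝ => Vmn B 0 0 (p.1 - p.2) * ρ p.1 * ρ p.2)

/-- Absolute minimum `Ē^{1DSTF}(Z,B)` of the 1D DSTF functional. -/
def Ebar1DSTF (Z B : ℝ) : ℝ := sInf { e | ∃ ρ, Adm1 B ρ ∧ e = E1DSTF B Z ρ }

/-- `E^{1D}_w(Z,B)`: infimum of the 1D functional without repulsion over `Adm1`. -/
def E1Dwinf (Z B : ℝ) : ℝ := sInf { e | ∃ ρ, Adm1 B ρ ∧ e = E1Dw B Z ρ }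

/-- Admissible densities for the functional without repulsion:
nonnegative with `∫ρ³ < ∞` and `∫ V₀ ρ < ∞`. -/
structure Adm1w (B : ℝ) (ρ : ℝ → ℝ) : Prop where
  meas : Measurable ρ
  nonneg : ∀ z, 0 ≤ ρ z
  cube_int : Integrable (fun z => ρ z ^ 3)
  pot_int : Integrable (fun z => Vm B 0 z * ρ z)

/-- `E^{1D}_w(Z,B)` as infimum over `Adm1w`. -/
def E1DwinfW (Z B : ℝ) : ℝ := sInf { e | ∃ ρ, Adm1w B ρ ∧ e = E1Dw B Z ρ }

/-!
Write `A_m(z) = ∫ |φ_m(x⊥)|² |(x⊥, z)| dx⊥` and `N_m = ∫ ρ_m`. Two estimates drive the proof.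

* `A_m(z) V_m(z) ≤ 2`. In polar coordinates both factors become integrals of
  `u^m e^{-u} (a u + c)^{±1/2}` over `(0, ∞)`; by symmetrisation their product only grows as
  `c ↓ 0`, and at `c = 0` it is `Γ(m + 3/2) Γ(m + 1/2) / m!² ≤ 2`.
* `1 ≤ V_{m,n}(z - z') (A_m(z) + A_n(z'))`: Cauchy–Schwarz for the probability density
  `|φ_m|² ⊗ |φ_n|²` gives `1 ≤ V_{m,n}(z - z') ∬ |φ_m|² |φ_n|² |x - x'|`, and
  `|x - x'| ≤ |x| + |x'|`.

Where `ρ_m(z) > 0` the Thomas–Fermi equation forces `Σ_n (V_{m,n} ⋆ ρ_n)(z) ≤ Z V_m(z)`; after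
multiplying by `A_m ρ_m` and integrating, the first estimate gives
`Σ_n ∬ A_m(z) ρ_m(z) V_{m,n}(z - z') ρ_n(z') ≤ 2 Z N_m`. Symmetrising in `(m, z) ↔ (n, z')` and
using the second estimate, `N_c² = Σ_{m,n} N_m N_n ≤ 4 Z N_c`.
-/

open Set Filter Nat

theorem polarCoord_symm_sq_add_sq (p : ℝ × ℝ) :
    (polarCoord.symm p).1 ^ 2 + (polarCoord.symm p).2 ^ 2 = p.1 ^ 2 := by
  simp only [polarCoord_symm_apply]
  linear_combination p.1 ^ 2 * Real.cos_sq_add_sin_sq p.2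

theorem integral_comp_sq_add_sq (g : ℝ → ℝ) :
    ∫ x : ℝ × ℝ, g (x.1 ^ 2 + x.2 ^ 2) = π * ∫ s in Ioi (0 : ℝ), g s := by
  rw [← integral_comp_polarCoord_symm]
  have hpolar : ∀ p ∈ polarCoord.target,
      p.1 • g ((polarCoord.symm p).1 ^ 2 + (polarCoord.symm p).2 ^ 2) = p.1 * g (p.1 ^ 2) * 1 := by
    intro p _
    rw [polarCoord_symm_sq_add_sq, smul_eq_mul, mul_one]
  have hsq : ∫ r in Ioi (0 : ℝ), r * g (r ^ 2) = (1 / 2) * ∫ s in Ioi (0 : ℝ), g s := by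
    rw [← integral_comp_rpow_Ioi_of_pos (g := g) two_pos, ← integral_const_mul]
    refine setIntegral_congr_fun measurableSet_Ioi fun r _ => ?_
    rw [show (2 : ℝ) - 1 = 1 by norm_num, Real.rpow_one, Real.rpow_two, smul_eq_mul]
    ring
  rw [setIntegral_congr_fun polarCoord.open_target.measurableSet hpolar, polarCoord_target,
    Measure.volume_eq_prod, setIntegral_prod_mul (fun r => r * g (r ^ 2)) (fun _ => (1 : ℝ)), hsq]
  have hlen : (∫ _ in Ioo (-π) π, (1 : ℝ)) = 2 * π := by
    simp [Real.pi_pos.le, two_mul]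
  rw [hlen]
  ring

theorem integrable_comp_sq_add_sq {g : ℝ → ℝ} (hg : IntegrableOn g (Ioi 0)) :
    Integrable fun x : ℝ × ℝ => g (x.1 ^ 2 + x.2 ^ 2) := by
  have hsq : IntegrableOn (fun r : ℝ => r * g (r ^ 2)) (Ioi 0) := by
    refine ((integrableOn_Ioi_comp_rpow_iff' g two_ne_zero).2 hg).congr_fun
      (fun r _ => ?_) measurableSet_Ioi
    norm_num [Real.rpow_two]
  have hpolar : IntegrableOn (fun p : ℝ × ℝ => p.1 * g (p.1 ^ 2) * 1) polarCoord.target := by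
    rw [polarCoord_target, IntegrableOn, Measure.volume_eq_prod, ← Measure.prod_restrict]
    exact hsq.mul_prod (integrableOn_const (by simp))
  rw [← integrableOn_univ, ← integrableOn_congr_set_ae polarCoord_source_ae_eq_univ,
    ← polarCoord.symm_image_target_eq_source,
    integrableOn_image_iff_integrableOn_abs_det_fderiv_smul volume
      polarCoord.open_target.measurableSet
      (fun p _ => (hasFDerivAt_polarCoord_symm p).hasFDerivWithinAt) polarCoord.symm.injOn]
  refine hpolar.congr_fun (fun p (hp : 0 < p.1 ∧ _) => ?_) polarCoord.open_target.measurableSet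
  simp only [det_fderivPolarCoordSymm, polarCoord_symm_sq_add_sq, abs_of_pos hp.1, smul_eq_mul,
    mul_one]

theorem integrableOn_pow_mul_exp_neg_mul_rpow (m : ℕ) {r : ℝ} (hr : -1 < r) :
    IntegrableOn (fun u : ℝ => u ^ m * exp (-u) * u ^ r) (Ioi 0) := by
  have hs : 0 < (m : ℝ) + r + 1 := by linarith [m.cast_nonneg' (α := ℝ)]
  refine (Real.GammaIntegral_convergent hs).congr_fun (fun u (hu : 0 < u) => ?_) measurableSet_Ioi
  dsimp only
  rw [add_sub_cancel_right, Real.rpow_add hu, Real.rpow_natCast]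
  ring

theorem integral_pow_mul_exp_neg_mul_rpow (m : ℕ) {r : ℝ} (hr : -1 < r) :
    ∫ u in Ioi (0 : ℝ), u ^ m * exp (-u) * u ^ r = Real.Gamma (m + r + 1) := by
  rw [Real.Gamma_eq_integral (by linarith [m.cast_nonneg' (α := ℝ)])]
  refine setIntegral_congr_fun measurableSet_Ioi fun u (hu : 0 < u) => ?_
  rw [add_sub_cancel_right, Real.rpow_add hu, Real.rpow_natCast]
  ring

theorem integrableOn_pow_mul_exp_neg (m : ℕ) :
    IntegrableOn (fun u : ℝ => u ^ m * exp (-u)) (Ioi 0) := by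
  simpa using integrableOn_pow_mul_exp_neg_mul_rpow m (r := 0) (by norm_num)

theorem integral_pow_mul_exp_neg (m : ℕ) :
    ∫ u in Ioi (0 : ℝ), u ^ m * exp (-u) = m ! := by
  simpa [Real.Gamma_nat_eq_factorial] using
    integral_pow_mul_exp_neg_mul_rpow m (r := 0) (by norm_num)

theorem integrableOn_pow_mul_exp_neg_mul_sqrt (m : ℕ) :
    IntegrableOn (fun u : ℝ => u ^ m * exp (-u) * √u) (Ioi 0) := by
  simpa only [Real.sqrt_eq_rpow] using
    integrableOn_pow_mul_exp_neg_mul_rpow m (r := 1 / 2) (by norm_num)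

theorem integral_pow_mul_exp_neg_mul_sqrt (m : ℕ) :
    ∫ u in Ioi (0 : ℝ), u ^ m * exp (-u) * √u = Real.Gamma (m + 3 / 2) := by
  simp only [Real.sqrt_eq_rpow]
  rw [integral_pow_mul_exp_neg_mul_rpow m (by norm_num)]
  norm_num [add_assoc]

theorem pow_mul_exp_neg_div_sqrt_eq_rpow (m : ℕ) {u : ℝ} (hu : 0 < u) :
    u ^ m * exp (-u) / √u = u ^ m * exp (-u) * u ^ (-(1 / 2) : ℝ) := by
  rw [Real.rpow_neg hu.le, Real.sqrt_eq_rpow, div_eq_mul_inv]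

theorem integrableOn_pow_mul_exp_neg_div_sqrt (m : ℕ) :
    IntegrableOn (fun u : ℝ => u ^ m * exp (-u) / √u) (Ioi 0) :=
  (integrableOn_pow_mul_exp_neg_mul_rpow m (by norm_num)).congr_fun
    (fun u hu => (pow_mul_exp_neg_div_sqrt_eq_rpow m hu).symm) measurableSet_Ioi

theorem integral_pow_mul_exp_neg_div_sqrt (m : ℕ) :
    ∫ u in Ioi (0 : ℝ), u ^ m * exp (-u) / √u = Real.Gamma (m + 1 / 2) := by
  rw [setIntegral_congr_fun measurableSet_Ioi fun u hu => pow_mul_exp_neg_div_sqrt_eq_rpow m hu,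
    integral_pow_mul_exp_neg_mul_rpow m (by norm_num)]
  norm_num [add_assoc]

theorem Gamma_add_three_halves_mul_Gamma_add_half_le (m : ℕ) :
    Real.Gamma (m + 3 / 2) * Real.Gamma (m + 1 / 2) ≤ 2 * (m ! : ℝ) ^ 2 := by
  induction m with
  | zero =>
    rw [Nat.cast_zero, zero_add, zero_add, show (3 / 2 : ℝ) = 1 / 2 + 1 by norm_num,
      Real.Gamma_add_one (by norm_num), Real.Gamma_one_half_eq]
    nlinarith [Real.mul_self_sqrt Real.pi_pos.le, Real.pi_le_four]
  | succ k ih =>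
    rw [Nat.cast_succ, add_right_comm, add_right_comm (k : ℝ) 1, Real.Gamma_add_one (by positivity),
      Real.Gamma_add_one (by positivity), Nat.factorial_succ, Nat.cast_mul, Nat.cast_succ]
    calc (k + 3 / 2) * Real.Gamma (k + 3 / 2) * ((k + 1 / 2) * Real.Gamma (k + 1 / 2))
        = ((k + 3 / 2) * (k + 1 / 2)) * (Real.Gamma (k + 3 / 2) * Real.Gamma (k + 1 / 2)) := by
          ring
      _ ≤ (k + 1) ^ 2 * (2 * (k ! : ℝ) ^ 2) := by gcongr; nlinarith
      _ = 2 * ((k + 1) * k !) ^ 2 := by ring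

theorem sqrt_div_sqrt_add_sqrt_div_sqrt {x y : ℝ} (hx : 0 < x) (hy : 0 < y) :
    √x / √y + √y / √x = (x + y) / √(x * y) := by
  rw [Real.sqrt_mul hx.le, div_add_div _ _ (Real.sqrt_pos.2 hy).ne' (Real.sqrt_pos.2 hx).ne',
    ← sq, ← sq, Real.sq_sqrt hx.le, Real.sq_sqrt hy.le, mul_comm (√y)]

theorem sqrt_div_sqrt_add_sqrt_div_sqrt_le {u v a c : ℝ} (hu : 0 < u) (hv : 0 < v) (ha : 0 < a)
    (hc : 0 ≤ c) :
    √(a * u + c) / √(a * v + c) + √(a * v + c) / √(a * u + c) ≤ √u / √v + √v / √u := by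
  have hX : 0 < a * u + c := by positivity
  have hY : 0 < a * v + c := by positivity
  rw [sqrt_div_sqrt_add_sqrt_div_sqrt hX hY, sqrt_div_sqrt_add_sqrt_div_sqrt hu hv,
    div_le_div_iff₀ (by positivity) (by positivity),
    ← pow_le_pow_iff_left₀ (by positivity) (by positivity) two_ne_zero, mul_pow, mul_pow,
    Real.sq_sqrt (by positivity), Real.sq_sqrt (by positivity)]
  -- the gap is `(u - v)² (a c (u + v) + c²)`
  nlinarith [mul_nonneg (sq_nonneg (u - v)) (by positivity : 0 ≤ a * c * (u + v) + c ^ 2)]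

section Weight

variable {w : ℝ → ℝ} {a c : ℝ}

theorem integrableOn_mul_sqrt_mul_add (hw : ∀ u ∈ Ioi (0 : ℝ), 0 ≤ w u)
    (hw₀ : IntegrableOn w (Ioi 0)) (hw₁ : IntegrableOn (fun u => w u * √u) (Ioi 0))
    (ha : 0 ≤ a) (hc : 0 ≤ c) :
    IntegrableOn (fun u => w u * √(a * u + c)) (Ioi 0) := by
  refine ((hw₁.const_mul √a).add (hw₀.const_mul √c)).mono'
    (hw₀.aestronglyMeasurable.mul
      (by fun_prop : Continuous fun u => √(a * u + c)).aestronglyMeasurable)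
    ((ae_restrict_iff' measurableSet_Ioi).2 (ae_of_all _ fun u (hu : 0 < u) => ?_))
  have hsqrt : √(a * u + c) ≤ √a * √u + √c := by
    rw [← Real.sqrt_mul ha, Real.sqrt_le_left (by positivity), add_sq,
      Real.sq_sqrt (by positivity), Real.sq_sqrt hc]
    nlinarith [Real.sqrt_nonneg (a * u), Real.sqrt_nonneg c]
  rw [Real.norm_of_nonneg (mul_nonneg (hw u hu) (Real.sqrt_nonneg _))]
  show w u * √(a * u + c) ≤ √a * (w u * √u) + √c * w u
  nlinarith [hw u hu]

theorem integrableOn_div_sqrt_mul_add (hw : ∀ u ∈ Ioi (0 : ℝ), 0 ≤ w u)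
    (hw₀ : IntegrableOn w (Ioi 0)) (hw₂ : IntegrableOn (fun u => w u / √u) (Ioi 0))
    (ha : 0 < a) (hc : 0 ≤ c) :
    IntegrableOn (fun u => w u / √(a * u + c)) (Ioi 0) := by
  refine (hw₂.const_mul (√a)⁻¹).mono'
    (hw₀.aemeasurable.div
      (by fun_prop : Measurable fun u => √(a * u + c)).aemeasurable).aestronglyMeasurable
    ((ae_restrict_iff' measurableSet_Ioi).2 (ae_of_all _ fun u (hu : 0 < u) => ?_))
  have hsqrt : √a * √u ≤ √(a * u + c) := by
    rw [← Real.sqrt_mul ha.le]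
    exact Real.sqrt_le_sqrt (by linarith)
  rw [Real.norm_of_nonneg (div_nonneg (hw u hu) (Real.sqrt_nonneg _))]
  calc w u / √(a * u + c) ≤ w u / (√a * √u) :=
        div_le_div_of_nonneg_left (hw u hu) (by positivity) hsqrt
    _ = (√a)⁻¹ * (w u / √u) := by ring

theorem integral_mul_integral_eq_half_integral_add_swap {α : Type*} [MeasurableSpace α]
    {μ : Measure α} [SFinite μ] {f g : α → ℝ} (hf : Integrable f μ) (hg : Integrable g μ) :
    (∫ x, f x ∂μ) * (∫ x, g x ∂μ) =
      (1 / 2) * ∫ p, (f p.1 * g p.2 + g p.1 * f p.2) ∂μ.prod μ := by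
  rw [integral_add (hf.mul_prod hg) (hg.mul_prod hf), integral_prod_mul, integral_prod_mul]
  ring

theorem integral_mul_sqrt_mul_add_mul_integral_div_sqrt_mul_add_le
    (hw : ∀ u ∈ Ioi (0 : ℝ), 0 ≤ w u) (hw₀ : IntegrableOn w (Ioi 0))
    (hw₁ : IntegrableOn (fun u => w u * √u) (Ioi 0))
    (hw₂ : IntegrableOn (fun u => w u / √u) (Ioi 0)) (ha : 0 < a) (hc : 0 ≤ c) :
    (∫ u in Ioi 0, w u * √(a * u + c)) * (∫ u in Ioi 0, w u / √(a * u + c)) ≤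
      (∫ u in Ioi 0, w u * √u) * (∫ u in Ioi 0, w u / √u) := by
  have hF := integrableOn_mul_sqrt_mul_add hw hw₀ hw₁ ha.le hc
  have hG := integrableOn_div_sqrt_mul_add hw hw₀ hw₂ ha hc
  rw [integral_mul_integral_eq_half_integral_add_swap hF hG,
    integral_mul_integral_eq_half_integral_add_swap hw₁ hw₂]
  refine mul_le_mul_of_nonneg_left (integral_mono_ae ((hF.mul_prod hG).add (hG.mul_prod hF))
    ((hw₁.mul_prod hw₂).add (hw₂.mul_prod hw₁)) ?_) (by norm_num)
  rw [Measure.prod_restrict]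
  filter_upwards [ae_restrict_mem (measurableSet_Ioi.prod measurableSet_Ioi)] with p hp
  obtain ⟨hu, hv⟩ : 0 < p.1 ∧ 0 < p.2 := hp
  have hww : 0 ≤ w p.1 * w p.2 := mul_nonneg (hw _ hu) (hw _ hv)
  calc w p.1 * √(a * p.1 + c) * (w p.2 / √(a * p.2 + c))
        + w p.1 / √(a * p.1 + c) * (w p.2 * √(a * p.2 + c))
      = w p.1 * w p.2 * (√(a * p.1 + c) / √(a * p.2 + c) + √(a * p.2 + c) / √(a * p.1 + c)) := by
        ring
    _ ≤ w p.1 * w p.2 * (√p.1 / √p.2 + √p.2 / √p.1) :=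
        mul_le_mul_of_nonneg_left (sqrt_div_sqrt_add_sqrt_div_sqrt_le hu hv ha hc) hww
    _ = w p.1 * √p.1 * (w p.2 / √p.2) + w p.1 / √p.1 * (w p.2 * √p.2) := by ring

end Weight

theorem one_le_integral_div_mul_integral_mul {α : Type*} [MeasurableSpace α] {μ : Measure α}
    {q u : α → ℝ} (hq : 0 ≤ᵐ[μ] q) (hu : ∀ᵐ x ∂μ, 0 < u x) (hq₁ : ∫ x, q x ∂μ = 1)
    (hdiv : Integrable (fun x => q x / u x) μ) (hmul : Integrable (fun x => q x * u x) μ) :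
    1 ≤ (∫ x, q x / u x ∂μ) * ∫ x, q x * u x ∂μ := by
  set a := ∫ x, q x / u x ∂μ
  set b := ∫ x, q x * u x ∂μ
  -- integrate the pointwise AM-GM inequality `2 q ≤ t q u + q / (t u)`
  have hamgm : ∀ t > 0, 2 ≤ t * b + a / t := by
    intro t ht
    calc (2 : ℝ) = ∫ x, 2 * q x ∂μ := by rw [integral_const_mul, hq₁, mul_one]
      _ ≤ ∫ x, (t * (q x * u x) + q x / u x / t) ∂μ := by
        refine integral_mono_of_nonneg (hq.mono fun x (hx : 0 ≤ q x) => by positivity)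
          ((hmul.const_mul t).add (hdiv.div_const t)) ?_
        filter_upwards [hq, hu] with x (hqx : 0 ≤ q x) hux
        have hgap : t * (q x * u x) + q x / u x / t - 2 * q x =
            q x * (t * u x - 1) ^ 2 / (t * u x) := by
          field_simp
          ring
        have : 0 ≤ q x * (t * u x - 1) ^ 2 / (t * u x) := by
          positivity
        linarith
      _ = t * b + a / t := by rw [integral_add (hmul.const_mul t) (hdiv.div_const t),
          integral_const_mul, integral_div]
  rcases lt_or_ge 0 a with ha | ha
  · have h := hamgm a ha
    rw [div_self ha.ne'] at h
    linarith
  · have h := hamgm (|b| + 1)⁻¹ (by positivity)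
    have hb : (|b| + 1)⁻¹ * b < 1 := by
      rw [inv_mul_lt_iff₀ (by positivity)]
      linarith [le_abs_self b]
    have ha' : a / (|b| + 1)⁻¹ ≤ 0 := by
      rw [div_inv_eq_mul]
      exact mul_nonpos_of_nonpos_of_nonneg ha (by positivity)
    linarith

theorem phiSq_mul_comp_sq_add_sq {B : ℝ} (hB : 0 < B) (m : ℕ) (h : ℝ → ℝ) (x : ℝ × ℝ) :
    phiSq B m x * h (x.1 ^ 2 + x.2 ^ 2) =
      B / (2 * π) / m ! * ((fun u => u ^ m * exp (-u) * h (2 * u / B))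
        (B / 2 * (x.1 ^ 2 + x.2 ^ 2))) := by
  have hB0 : B ≠ 0 := hB.ne'
  simp only [phiSq]
  rw [show 2 * (B / 2 * (x.1 ^ 2 + x.2 ^ 2)) / B = x.1 ^ 2 + x.2 ^ 2 by field_simp]
  ring_nf

theorem integral_phiSq_mul {B : ℝ} (hB : 0 < B) (m : ℕ) (h : ℝ → ℝ) :
    ∫ x : ℝ × ℝ, phiSq B m x * h (x.1 ^ 2 + x.2 ^ 2) =
      (m ! : ℝ)⁻¹ * ∫ u in Ioi (0 : ℝ), u ^ m * exp (-u) * h (2 * u / B) := by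
  set F : ℝ → ℝ := fun u => u ^ m * exp (-u) * h (2 * u / B)
  have hF : ∀ x : ℝ × ℝ, phiSq B m x * h (x.1 ^ 2 + x.2 ^ 2) =
      B / (2 * π) / m ! * F (B / 2 * (x.1 ^ 2 + x.2 ^ 2)) := phiSq_mul_comp_sq_add_sq hB m h
  rw [integral_congr_ae (ae_of_all _ hF), integral_const_mul,
    integral_comp_sq_add_sq (fun s => F (B / 2 * s)),
    integral_comp_mul_left_Ioi F 0 (by positivity : 0 < B / 2), mul_zero, smul_eq_mul]
  field_simp

theorem integrable_phiSq_mul {B : ℝ} (hB : 0 < B) (m : ℕ) {h : ℝ → ℝ}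
    (hint : IntegrableOn (fun u => u ^ m * exp (-u) * h (2 * u / B)) (Ioi 0)) :
    Integrable fun x : ℝ × ℝ => phiSq B m x * h (x.1 ^ 2 + x.2 ^ 2) := by
  set F : ℝ → ℝ := fun u => u ^ m * exp (-u) * h (2 * u / B)
  have hF : ∀ x : ℝ × ℝ, phiSq B m x * h (x.1 ^ 2 + x.2 ^ 2) =
      B / (2 * π) / m ! * F (B / 2 * (x.1 ^ 2 + x.2 ^ 2)) := phiSq_mul_comp_sq_add_sq hB m h
  simp_rw [hF]
  have hscaled := (integrableOn_Ioi_comp_mul_left_iff F 0 (by positivity : 0 < B / 2)).2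
  rw [mul_zero] at hscaled
  exact (integrable_comp_sq_add_sq (hscaled hint)).const_mul _

theorem phiSq_nonneg {B : ℝ} (hB : 0 < B) (m : ℕ) (x : ℝ × ℝ) : 0 ≤ phiSq B m x := by
  unfold phiSq
  positivity

theorem integral_phiSq {B : ℝ} (hB : 0 < B) (m : ℕ) : ∫ x : ℝ × ℝ, phiSq B m x = 1 := by
  have h := integral_phiSq_mul hB m fun _ => 1
  simp only [mul_one] at h
  rw [h, integral_pow_mul_exp_neg, inv_mul_cancel₀ (by positivity)]

theorem integrable_phiSq {B : ℝ} (hB : 0 < B) (m : ℕ) : Integrable (phiSq B m) := by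
  simpa using
    integrable_phiSq_mul hB m (h := fun _ => 1) (by simpa using integrableOn_pow_mul_exp_neg m)

def Am (B : ℝ) (m : ℕ) (z : ℝ) : ℝ := ∫ x : ℝ × ℝ, phiSq B m x * normx x z

theorem Am_eq {B : ℝ} (hB : 0 < B) (m : ℕ) (z : ℝ) :
    Am B m z = (m ! : ℝ)⁻¹ * ∫ u in Ioi (0 : ℝ), u ^ m * exp (-u) * √(2 / B * u + z ^ 2) := by
  unfold Am normx
  simpa only [div_mul_eq_mul_div] using integral_phiSq_mul hB m fun s => √(s + z ^ 2)

theorem Vm_eq {B : ℝ} (hB : 0 < B) (m : ℕ) (z : ℝ) :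
    Vm B m z = (m ! : ℝ)⁻¹ * ∫ u in Ioi (0 : ℝ), u ^ m * exp (-u) / √(2 / B * u + z ^ 2) := by
  unfold Vm normx
  simpa only [div_mul_eq_mul_div, ← div_eq_mul_inv] using
    integral_phiSq_mul hB m fun s => (√(s + z ^ 2))⁻¹

theorem integrable_phiSq_mul_normx {B : ℝ} (hB : 0 < B) (m : ℕ) (z : ℝ) :
    Integrable fun x => phiSq B m x * normx x z := by
  have h := integrableOn_mul_sqrt_mul_add (fun u (hu : 0 < u) => by positivity)
    (integrableOn_pow_mul_exp_neg m) (integrableOn_pow_mul_exp_neg_mul_sqrt m)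
    (by positivity : 0 ≤ 2 / B) (sq_nonneg z)
  simp only [div_mul_eq_mul_div] at h
  exact integrable_phiSq_mul hB m (h := fun s => √(s + z ^ 2)) h

theorem Am_mul_Vm_le_two {B : ℝ} (hB : 0 < B) (m : ℕ) (z : ℝ) : Am B m z * Vm B m z ≤ 2 := by
  have hkey := integral_mul_sqrt_mul_add_mul_integral_div_sqrt_mul_add_le
    (fun u (hu : 0 < u) => by positivity) (integrableOn_pow_mul_exp_neg m)
    (integrableOn_pow_mul_exp_neg_mul_sqrt m) (integrableOn_pow_mul_exp_neg_div_sqrt m)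
    (by positivity : 0 < 2 / B) (sq_nonneg z)
  rw [integral_pow_mul_exp_neg_mul_sqrt, integral_pow_mul_exp_neg_div_sqrt] at hkey
  rw [Am_eq hB, Vm_eq hB]
  calc _ = ((m ! : ℝ)⁻¹) ^ 2 * ((∫ u in Ioi (0 : ℝ), u ^ m * exp (-u) * √(2 / B * u + z ^ 2)) *
        ∫ u in Ioi (0 : ℝ), u ^ m * exp (-u) / √(2 / B * u + z ^ 2)) := by ring
    _ ≤ ((m ! : ℝ)⁻¹) ^ 2 * (2 * (m ! : ℝ) ^ 2) :=
      mul_le_mul_of_nonneg_left (hkey.trans (Gamma_add_three_halves_mul_Gamma_add_half_le m))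
        (by positivity)
    _ = 2 := by field_simp

theorem normx_nonneg (x : ℝ × ℝ) (z : ℝ) : 0 ≤ normx x z := Real.sqrt_nonneg _

theorem abs_le_normx (x : ℝ × ℝ) (z : ℝ) : |z| ≤ normx x z := by
  rw [← Real.sqrt_sq_eq_abs]
  exact Real.sqrt_le_sqrt (by nlinarith)

theorem normx_sub_le (x y : ℝ × ℝ) (z z' : ℝ) :
    normx (x.1 - y.1, x.2 - y.2) (z - z') ≤ normx x z + normx y z' := by
  have hx := Real.sq_sqrt (by positivity : 0 ≤ x.1 ^ 2 + x.2 ^ 2 + z ^ 2)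
  have hy := Real.sq_sqrt (by positivity : 0 ≤ y.1 ^ 2 + y.2 ^ 2 + z' ^ 2)
  have hinner : |x.1 * y.1 + x.2 * y.2 + z * z'| ≤ normx x z * normx y z' := by
    have hcs : (x.1 * y.1 + x.2 * y.2 + z * z') ^ 2 ≤
        (x.1 ^ 2 + x.2 ^ 2 + z ^ 2) * (y.1 ^ 2 + y.2 ^ 2 + z' ^ 2) := by
      nlinarith [sq_nonneg (x.1 * y.2 - x.2 * y.1), sq_nonneg (x.1 * z' - z * y.1),
        sq_nonneg (x.2 * z' - z * y.2)]
    rw [normx, normx, ← Real.sqrt_mul (by positivity)]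
    exact Real.abs_le_sqrt hcs
  rw [normx, Real.sqrt_le_left (add_nonneg (normx_nonneg x z) (normx_nonneg y z')), add_sq]
  simp only [normx] at hinner ⊢
  rw [hx, hy]
  nlinarith [neg_abs_le (x.1 * y.1 + x.2 * y.2 + z * z')]

theorem Am_nonneg {B : ℝ} (hB : 0 < B) (m : ℕ) (z : ℝ) : 0 ≤ Am B m z :=
  integral_nonneg fun x => mul_nonneg (phiSq_nonneg hB m x) (normx_nonneg x z)

theorem Vmn_nonneg {B : ℝ} (hB : 0 < B) (m n : ℕ) (w : ℝ) : 0 ≤ Vmn B m n w :=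
  integral_nonneg fun x => integral_nonneg fun y =>
    div_nonneg (mul_nonneg (phiSq_nonneg hB m x) (phiSq_nonneg hB n y)) (normx_nonneg _ _)

theorem measurable_Am (B : ℝ) (m : ℕ) : Measurable (Am B m) := by
  have h : StronglyMeasurable fun p : ℝ × (ℝ × ℝ) => phiSq B m p.2 * normx p.2 p.1 := by
    apply Measurable.stronglyMeasurable
    unfold phiSq normx
    fun_prop
  exact h.integral_prod_right'.measurable

theorem measurable_Vmn (B : ℝ) (m n : ℕ) : Measurable (Vmn B m n) := by
  have h : StronglyMeasurable fun q : (ℝ × (ℝ × ℝ)) × (ℝ × ℝ) =>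
      phiSq B m q.1.2 * phiSq B n q.2 / normx (q.1.2.1 - q.2.1, q.1.2.2 - q.2.2) q.1.1 := by
    apply Measurable.stronglyMeasurable
    unfold phiSq normx
    fun_prop
  exact h.integral_prod_right'.integral_prod_right'.measurable

theorem integrable_phiSq_mul_phiSq {B : ℝ} (hB : 0 < B) (m n : ℕ) :
    Integrable fun p : (ℝ × ℝ) × (ℝ × ℝ) => phiSq B m p.1 * phiSq B n p.2 := by
  rw [Measure.volume_eq_prod]
  exact (integrable_phiSq hB m).mul_prod (integrable_phiSq hB n)

theorem integrable_Vmn_kernel {B : ℝ} (hB : 0 < B) (m n : ℕ) {w : ℝ} (hw : w ≠ 0) :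
    Integrable fun p : (ℝ × ℝ) × (ℝ × ℝ) =>
      phiSq B m p.1 * phiSq B n p.2 / normx (p.1.1 - p.2.1, p.1.2 - p.2.2) w := by
  refine ((integrable_phiSq_mul_phiSq hB m n).div_const |w|).mono' ?_ (ae_of_all _ fun p => ?_)
  · apply Measurable.aestronglyMeasurable
    unfold phiSq normx
    fun_prop
  · have hpp := mul_nonneg (phiSq_nonneg hB m p.1) (phiSq_nonneg hB n p.2)
    rw [Real.norm_of_nonneg (div_nonneg hpp (normx_nonneg _ _))]
    exact div_le_div_of_nonneg_left hpp (abs_pos.2 hw) (abs_le_normx _ _)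

theorem Vmn_eq_integral_prod {B : ℝ} (hB : 0 < B) (m n : ℕ) {w : ℝ} (hw : w ≠ 0) :
    Vmn B m n w = ∫ p : (ℝ × ℝ) × (ℝ × ℝ),
      phiSq B m p.1 * phiSq B n p.2 / normx (p.1.1 - p.2.1, p.1.2 - p.2.2) w := by
  have h := integrable_Vmn_kernel hB m n hw
  rw [Measure.volume_eq_prod] at h ⊢
  exact (integral_prod _ h).symm

theorem Vmn_neg {B : ℝ} (hB : 0 < B) (m n : ℕ) {w : ℝ} (hw : w ≠ 0) :
    Vmn B n m (-w) = Vmn B m n w := by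
  rw [Vmn_eq_integral_prod hB n m (neg_ne_zero.2 hw), Vmn_eq_integral_prod hB m n hw,
    Measure.volume_eq_prod, ← integral_prod_swap]
  refine integral_congr_ae (ae_of_all _ fun p => ?_)
  have hnormx :
      normx (p.2.1 - p.1.1, p.2.2 - p.1.2) (-w) = normx (p.1.1 - p.2.1, p.1.2 - p.2.2) w := by
    unfold normx
    ring_nf
  simp only [Prod.fst_swap, Prod.snd_swap, hnormx, mul_comm]

theorem integrable_phiSq_mul_phiSq_mul_normx_add {B : ℝ} (hB : 0 < B) (m n : ℕ) (z z' : ℝ) :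
    Integrable fun p : (ℝ × ℝ) × (ℝ × ℝ) =>
      phiSq B m p.1 * phiSq B n p.2 * (normx p.1 z + normx p.2 z') := by
  have h := ((integrable_phiSq_mul_normx hB m z).mul_prod (integrable_phiSq hB n)).add
    ((integrable_phiSq hB m).mul_prod (integrable_phiSq_mul_normx hB n z'))
  rw [← Measure.volume_eq_prod] at h
  exact h.congr (ae_of_all _ fun p => by simp only [Pi.add_apply]; ring)

theorem integral_phiSq_mul_phiSq_mul_normx_add {B : ℝ} (hB : 0 < B) (m n : ℕ) (z z' : ℝ) :
    ∫ p : (ℝ × ℝ) × (ℝ × ℝ), phiSq B m p.1 * phiSq B n p.2 * (normx p.1 z + normx p.2 z') =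
      Am B m z + Am B n z' := by
  have h₁ := (integrable_phiSq_mul_normx hB m z).mul_prod (integrable_phiSq hB n)
  have h₂ := (integrable_phiSq hB m).mul_prod (integrable_phiSq_mul_normx hB n z')
  rw [Measure.volume_eq_prod]
  calc _ = ∫ p : (ℝ × ℝ) × (ℝ × ℝ), ((phiSq B m p.1 * normx p.1 z) * phiSq B n p.2 +
        phiSq B m p.1 * (phiSq B n p.2 * normx p.2 z')) ∂(volume.prod volume) :=
        integral_congr_ae (ae_of_all _ fun p => by ring)
    _ = Am B m z + Am B n z' := by
      rw [integral_add h₁ h₂, integral_prod_mul (fun x => phiSq B m x * normx x z) (phiSq B n),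
        integral_prod_mul (phiSq B m) (fun y => phiSq B n y * normx y z'), integral_phiSq hB,
        integral_phiSq hB, mul_one, one_mul, Am, Am]

theorem one_le_Vmn_mul_add_Am {B : ℝ} (hB : 0 < B) (m n : ℕ) {z z' : ℝ} (hzz' : z ≠ z') :
    1 ≤ Vmn B m n (z - z') * (Am B m z + Am B n z') := by
  set q : (ℝ × ℝ) × (ℝ × ℝ) → ℝ := fun p => phiSq B m p.1 * phiSq B n p.2
  set u : (ℝ × ℝ) × (ℝ × ℝ) → ℝ := fun p => normx (p.1.1 - p.2.1, p.1.2 - p.2.2) (z - z')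
  have hq : ∀ p, 0 ≤ q p := fun p => mul_nonneg (phiSq_nonneg hB m p.1) (phiSq_nonneg hB n p.2)
  have hu : ∀ p, 0 < u p := fun p => (abs_pos.2 (sub_ne_zero.2 hzz')).trans_le (abs_le_normx _ _)
  have hq₁ : ∫ p, q p = 1 := by
    rw [Measure.volume_eq_prod, integral_prod_mul, integral_phiSq hB, integral_phiSq hB, one_mul]
  have hqu : ∀ p, q p * u p ≤ phiSq B m p.1 * phiSq B n p.2 * (normx p.1 z + normx p.2 z') :=
    fun p => mul_le_mul_of_nonneg_left (normx_sub_le p.1 p.2 z z') (hq p)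
  have hmul : Integrable fun p => q p * u p := by
    refine (integrable_phiSq_mul_phiSq_mul_normx_add hB m n z z').mono' ?_
      (ae_of_all _ fun p => ?_)
    · apply Measurable.aestronglyMeasurable
      unfold q u phiSq normx
      fun_prop
    · rw [Real.norm_of_nonneg (mul_nonneg (hq p) (hu p).le)]
      exact hqu p
  calc (1 : ℝ) ≤ (∫ p, q p / u p) * ∫ p, q p * u p :=
        one_le_integral_div_mul_integral_mul (ae_of_all _ hq) (ae_of_all _ hu) hq₁
          (integrable_Vmn_kernel hB m n (sub_ne_zero.2 hzz')) hmul
    _ ≤ Vmn B m n (z - z') * (Am B m z + Am B n z') := by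
      rw [← Vmn_eq_integral_prod hB m n (sub_ne_zero.2 hzz'),
        ← integral_phiSq_mul_phiSq_mul_normx_add hB m n z z']
      exact mul_le_mul_of_nonneg_left
        (integral_mono hmul (integrable_phiSq_mul_phiSq_mul_normx_add hB m n z z') hqu)
        (Vmn_nonneg hB m n _)

theorem mul_le_mul_of_mul_sq_eq_max_sub {k r P S : ℝ} (hk : 0 < k) (hr : 0 ≤ r)
    (h : k * r ^ 2 = max (P - S) 0) : S * r ≤ P * r := by
  rcases hr.eq_or_lt with rfl | hr
  · simp
  have hpos : 0 < max (P - S) 0 := h ▸ by positivity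
  have hSP : S < P := by
    by_contra! hPS
    rw [max_eq_right (by linarith)] at hpos
    exact hpos.false
  exact mul_le_mul_of_nonneg_right hSP.le hr.le

theorem Am_mul_mul_le_of_sq_eq_max_sub {B Z r S : ℝ} (hB : 0 < B) (hZ : 0 ≤ Z) (hr : 0 ≤ r)
    {m : ℕ} {z : ℝ} (h : 3 * kappa * r ^ 2 = max (Z * Vm B m z - S) 0) :
    Am B m z * r * S ≤ 2 * Z * r := by
  have hpot := mul_le_mul_of_mul_sq_eq_max_sub (by unfold kappa; positivity) hr h
  calc Am B m z * r * S = Am B m z * (S * r) := by ring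
    _ ≤ Am B m z * (Z * Vm B m z * r) := mul_le_mul_of_nonneg_left hpot (Am_nonneg hB m z)
    _ = Z * (Am B m z * Vm B m z) * r := by ring
    _ ≤ Z * 2 * r :=
      mul_le_mul_of_nonneg_right (mul_le_mul_of_nonneg_left (Am_mul_Vm_le_two hB m z) hZ) hr
    _ = 2 * Z * r := by ring

theorem ae_fst_ne_snd : ∀ᵐ p : ℝ × ℝ, p.1 ≠ p.2 := by
  rw [Measure.volume_eq_prod,
    Measure.ae_prod_iff_ae_ae (p := fun p : ℝ × ℝ => p.1 ≠ p.2)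
      (measurableSet_eq_fun measurable_fst measurable_snd).compl]
  exact ae_of_all _ fun x =>
    (measure_eq_zero_iff_ae_notMem.1 (measure_singleton x)).mono fun _ hy => Ne.symm hy

theorem tsum_le_two_mul_of_mul_le_add {ι : Type*} {t : ι → ℝ≥0∞} {D : ι → ι → ℝ≥0∞}
    {c : ℝ≥0∞} (ht : ∀ i, t i ≠ ∞) (hpair : ∀ i j, t i * t j ≤ D i j + D j i)
    (hrow : ∀ i, ∑' j, D i j ≤ c * t i) : ∑' i, t i ≤ 2 * c := by
  rw [ENNReal.tsum_eq_iSup_sum]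
  refine iSup_le fun S => ?_
  set T := ∑ i ∈ S, t i
  have hsq : T * T ≤ 2 * c * T := calc
    T * T = ∑ i ∈ S, ∑ j ∈ S, t i * t j := Finset.sum_mul_sum _ _ _ _
    _ ≤ ∑ i ∈ S, ∑ j ∈ S, (D i j + D j i) := by gcongr with i _ j _; exact hpair i j
    _ = 2 * ∑ i ∈ S, ∑ j ∈ S, D i j := by
      simp only [Finset.sum_add_distrib]
      rw [Finset.sum_comm (f := fun i j => D j i), two_mul]
    _ ≤ 2 * ∑ i ∈ S, c * t i := by
      gcongr with i _
      exact (ENNReal.sum_le_tsum S).trans (hrow i)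
    _ = 2 * c * T := by rw [← Finset.mul_sum, mul_assoc]
  rcases eq_or_ne T 0 with h0 | h0
  · simp [h0]
  · exact (ENNReal.mul_le_mul_iff_left h0 (ENNReal.sum_ne_top.2 fun i _ => ht i)).1 hsq

def weightedRepulsion (B : ℝ) (ρ : ℕ → ℝ → ℝ) (m n : ℕ) : ℝ≥0∞ :=
  ∫⁻ p : ℝ × ℝ, ENNReal.ofReal (Am B m p.1 * ρ m p.1 * (Vmn B m n (p.1 - p.2) * ρ n p.2))

section Density

variable {B : ℝ} {ρ : ℕ → ℝ → ℝ}

theorem measurable_Vmn_conv_integrand (hmeas : ∀ m, Measurable (ρ m)) (m n : ℕ) :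
    Measurable fun p : ℝ × ℝ => Vmn B m n (p.1 - p.2) * ρ n p.2 :=
  ((measurable_Vmn B m n).comp (measurable_fst.sub measurable_snd)).mul
    ((hmeas n).comp measurable_snd)

theorem measurable_weightedRepulsion_integrand (hmeas : ∀ m, Measurable (ρ m)) (m n : ℕ) :
    Measurable fun p : ℝ × ℝ => Am B m p.1 * ρ m p.1 * (Vmn B m n (p.1 - p.2) * ρ n p.2) :=
  (((measurable_Am B m).mul (hmeas m)).comp measurable_fst).mul
    (measurable_Vmn_conv_integrand hmeas m n)

theorem lintegral_mul_lintegral_le_weightedRepulsion_add (hB : 0 < B)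
    (hmeas : ∀ m, Measurable (ρ m)) (hnn : ∀ m z, 0 ≤ ρ m z) (m n : ℕ) :
    (∫⁻ z, ENNReal.ofReal (ρ m z)) * (∫⁻ z, ENNReal.ofReal (ρ n z)) ≤
      weightedRepulsion B ρ m n + weightedRepulsion B ρ n m := by
  rw [weightedRepulsion, weightedRepulsion, Measure.volume_eq_prod,
    ← lintegral_prod_mul (hmeas m).ennreal_ofReal.aemeasurable
      (hmeas n).ennreal_ofReal.aemeasurable,
    ← lintegral_prod_swap (fun p => ENNReal.ofReal
      (Am B n p.1 * ρ n p.1 * (Vmn B n m (p.1 - p.2) * ρ m p.2))),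
    ← lintegral_add_left (measurable_weightedRepulsion_integrand hmeas m n).ennreal_ofReal]
  rw [← Measure.volume_eq_prod]
  refine lintegral_mono_ae (ae_fst_ne_snd.mono fun p hp => ?_)
  have hF : ∀ i j (q : ℝ × ℝ), 0 ≤ Am B i q.1 * ρ i q.1 * (Vmn B i j (q.1 - q.2) * ρ j q.2) :=
    fun i j q => mul_nonneg (mul_nonneg (Am_nonneg hB i _) (hnn i _))
      (mul_nonneg (Vmn_nonneg hB i j _) (hnn j _))
  rw [← ENNReal.ofReal_mul (hnn m p.1), ← ENNReal.ofReal_add (hF m n p) (hF n m p.swap)]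
  refine ENNReal.ofReal_le_ofReal ?_
  simp only [Prod.fst_swap, Prod.snd_swap]
  rw [← neg_sub p.1 p.2, Vmn_neg hB m n (sub_ne_zero.2 hp)]
  calc ρ m p.1 * ρ n p.2
      ≤ Vmn B m n (p.1 - p.2) * (Am B m p.1 + Am B n p.2) * (ρ m p.1 * ρ n p.2) :=
        le_mul_of_one_le_left (mul_nonneg (hnn m p.1) (hnn n p.2)) (one_le_Vmn_mul_add_Am hB m n hp)
    _ = _ := by ring

theorem weightedRepulsion_eq_lintegral (hB : 0 < B) (hmeas : ∀ m, Measurable (ρ m))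
    (hnn : ∀ m z, 0 ≤ ρ m z) (m n : ℕ) :
    weightedRepulsion B ρ m n = ∫⁻ z, ENNReal.ofReal (Am B m z * ρ m z) *
      ∫⁻ z', ENNReal.ofReal (Vmn B m n (z - z') * ρ n z') := by
  rw [weightedRepulsion, Measure.volume_eq_prod,
    lintegral_prod _ (measurable_weightedRepulsion_integrand hmeas m n).ennreal_ofReal.aemeasurable]
  refine lintegral_congr fun z => ?_
  have hslice : Measurable fun z' => ENNReal.ofReal (Vmn B m n (z - z') * ρ n z') :=
    ((measurable_Vmn_conv_integrand hmeas m n).comp measurable_prodMk_left).ennreal_ofReal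
  rw [← lintegral_const_mul _ hslice]
  exact lintegral_congr fun z' => ENNReal.ofReal_mul (mul_nonneg (Am_nonneg hB m z) (hnn m z))

theorem tsum_weightedRepulsion_le {Z : ℝ} (hZ : 0 ≤ Z) (hB : 0 < B)
    (hmeas : ∀ m, Measurable (ρ m)) (hnn : ∀ m z, 0 ≤ ρ m z) {m : ℕ}
    (hconv : ∀ᵐ z : ℝ, (∀ n, Integrable (fun z' => Vmn B m n (z - z') * ρ n z')) ∧
      Summable (fun n => ∫ z' : ℝ, Vmn B m n (z - z') * ρ n z'))
    (hTF : ∀ᵐ z : ℝ, 3 * kappa * ρ m z ^ 2 =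
      max (Z * Vm B m z - ∑' n : ℕ, ∫ z' : ℝ, Vmn B m n (z - z') * ρ n z') 0) :
    ∑' n, weightedRepulsion B ρ m n ≤ ENNReal.ofReal (2 * Z) * ∫⁻ z, ENNReal.ofReal (ρ m z) := by
  have hV : ∀ n z z', 0 ≤ Vmn B m n (z - z') * ρ n z' :=
    fun n z z' => mul_nonneg (Vmn_nonneg hB m n _) (hnn n z')
  have hinner : ∀ n, Measurable fun z => ∫⁻ z', ENNReal.ofReal (Vmn B m n (z - z') * ρ n z') :=
    fun n => (measurable_Vmn_conv_integrand hmeas m n).ennreal_ofReal.lintegral_prod_right'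
  calc ∑' n, weightedRepulsion B ρ m n
      = ∫⁻ z, ∑' n, ENNReal.ofReal (Am B m z * ρ m z) *
          ∫⁻ z', ENNReal.ofReal (Vmn B m n (z - z') * ρ n z') := by
        simp_rw [weightedRepulsion_eq_lintegral hB hmeas hnn]
        exact (lintegral_tsum fun n =>
          ((((measurable_Am B m).mul (hmeas m)).ennreal_ofReal).mul (hinner n)).aemeasurable).symm
    _ ≤ ∫⁻ z, ENNReal.ofReal (2 * Z) * ENNReal.ofReal (ρ m z) := by
        refine lintegral_mono_ae ?_
        filter_upwards [hconv, hTF] with z ⟨hint, hsum⟩ htf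
        have hlin : ∀ n, ∫⁻ z', ENNReal.ofReal (Vmn B m n (z - z') * ρ n z') =
            ENNReal.ofReal (∫ z', Vmn B m n (z - z') * ρ n z') := fun n =>
          (ofReal_integral_eq_lintegral_ofReal (hint n) (ae_of_all _ (hV n z))).symm
        simp_rw [hlin]
        rw [ENNReal.tsum_mul_left, ← ENNReal.ofReal_tsum_of_nonneg
          (fun n => integral_nonneg (hV n z)) hsum,
          ← ENNReal.ofReal_mul (mul_nonneg (Am_nonneg hB m z) (hnn m z)),
          ← ENNReal.ofReal_mul (by linarith : (0 : ℝ) ≤ 2 * Z)]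
        exact ENNReal.ofReal_le_ofReal (Am_mul_mul_le_of_sq_eq_max_sub hB hZ (hnn m z) htf)
    _ = ENNReal.ofReal (2 * Z) * ∫⁻ z, ENNReal.ofReal (ρ m z) :=
        lintegral_const_mul _ (hmeas m).ennreal_ofReal

end Density

/-- a solution of the DSTF Thomas–Fermi equations with zero chemical
potential (the unconstrained minimizer) has total mass `N_c ≤ 4Z`. -/
theorem stmt9 (Z B : ℝ) (hZ : 0 < Z) (hB : 0 < B)
    (ρ : ℕ → ℝ → ℝ) (hmeas : ∀ m, Measurable (ρ m)) (hnn : ∀ m z, 0 ≤ ρ m z)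
    (hL1 : ∀ m, Integrable (ρ m))
    (hconv : ∀ m, ∀ᵐ z : ℝ ∂volume,
      (∀ n, Integrable (fun z' => Vmn B m n (z - z') * ρ n z')) ∧
      Summable (fun n => ∫ z' : ℝ, Vmn B m n (z - z') * ρ n z'))
    (hTF : ∀ m, ∀ᵐ z : ℝ ∂volume,
      3 * kappa * ρ m z ^ 2 =
        max (Z * Vm B m z - ∑' n : ℕ, ∫ z' : ℝ, Vmn B m n (z - z') * ρ n z') 0) :
    (∑' m : ℕ, ∫⁻ z : ℝ, ENNReal.ofReal (ρ m z)) ≤ ENNReal.ofReal (4 * Z) := by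
  calc (∑' m : ℕ, ∫⁻ z : ℝ, ENNReal.ofReal (ρ m z))
      ≤ 2 * ENNReal.ofReal (2 * Z) :=
        tsum_le_two_mul_of_mul_le_add (fun m => (hL1 m).lintegral_lt_top.ne)
          (lintegral_mul_lintegral_le_weightedRepulsion_add hB hmeas hnn)
          (fun m => tsum_weightedRepulsion_le hZ.le hB hmeas hnn (hconv m) (hTF m))
    _ = ENNReal.ofReal (4 * Z) := by
        rw [← ENNReal.ofReal_ofNat 2, ← ENNReal.ofReal_mul zero_le_two]
        ring_nf
end
end

section
/- For all Z > 0 and B > 0: E^{1D}_w(Z,B) = Z^{3/2} B^{1/4} E^{1D}_w(1,1). -/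
open MeasureTheory Real ENNReal

noncomputable section

/-!
Dilating `x⊥` by `√B` gives `V₀^B(z) = √B V₀^1(√B z)`. Hence `ρ(z) = √Z B^{1/4} σ(√B z)` is a
bijection between admissible densities for `(1, 1)` and for `(Z, B)`, and it multiplies both
terms of the functional by `Z^{3/2} B^{1/4}`: the kinetic term picks up `a³/√B` and the potential
term `Z a`, with `a = √Z B^{1/4}`.
-/

lemma phiSq_eq_mul_phiSq_one {B : ℝ} (hB : 0 ≤ B) (m : ℕ) (x : ℝ × ℝ) :
    phiSq B m x = B * phiSq 1 m (√B • x) := by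
  simp only [phiSq, Prod.smul_fst, Prod.smul_snd, smul_eq_mul, mul_pow, Real.sq_sqrt hB]
  ring_nf

lemma normx_smul (c : ℝ) (x : ℝ × ℝ) (z : ℝ) :
    normx (c • x) (c * z) = |c| * normx x z := by
  rw [normx, normx, ← Real.sqrt_sq_eq_abs, ← Real.sqrt_mul (sq_nonneg c)]
  congr 1
  simp only [Prod.smul_fst, Prod.smul_snd, smul_eq_mul]
  ring

lemma Vm_eq_sqrt_mul_Vm_one {B : ℝ} (hB : 0 < B) (m : ℕ) (z : ℝ) :
    Vm B m z = √B * Vm 1 m (√B * z) := by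
  have hu : 0 < √B := Real.sqrt_pos.2 hB
  set f : ℝ × ℝ → ℝ := fun y => phiSq 1 m y / normx y (√B * z)
  have hpoint : ∀ x : ℝ × ℝ, phiSq B m x / normx x z = B * √B * f (√B • x) := by
    intro x
    dsimp only [f]
    rw [phiSq_eq_mul_phiSq_one hB.le, mul_assoc B, normx_smul, abs_of_pos hu,
      ← mul_div_assoc, mul_div_mul_left _ _ hu.ne', mul_div_assoc]
  have hfr : Module.finrank ℝ (ℝ × ℝ) = 2 := by simp
  rw [Vm, Vm, integral_congr_ae (Filter.Eventually.of_forall hpoint), integral_const_mul,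
    Measure.integral_comp_smul volume f, hfr, smul_eq_mul]
  nth_rw 1 [← Real.sq_sqrt hB.le]
  rw [abs_of_pos (by positivity)]
  field_simp
  rfl

lemma Adm1w.comp_mul {B B' a c u : ℝ} {σ : ℝ → ℝ} (hσ : Adm1w B' σ) (ha : 0 ≤ a) (hu : u ≠ 0)
    (hV : ∀ z, Vm B 0 z = c * Vm B' 0 (u * z)) :
    Adm1w B (fun z => a * σ (u * z)) where
  meas := (hσ.meas.comp (measurable_const_mul u)).const_mul a
  nonneg z := mul_nonneg ha (hσ.nonneg _)
  cube_int := by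
    simpa only [mul_pow] using (hσ.cube_int.comp_mul_left' hu).const_mul (a ^ 3)
  pot_int := by
    have hpot : (fun z => Vm B 0 z * (a * σ (u * z)))
        = fun z => c * a * (Vm B' 0 (u * z) * σ (u * z)) := by
      ext z
      rw [hV]
      ring
    rw [hpot]
    exact (hσ.pot_int.comp_mul_left' hu).const_mul _

lemma E1Dw_comp_mul {B B' Z a c u : ℝ} (σ : ℝ → ℝ) (ha : a ≠ 0)
    (hV : ∀ z, Vm B 0 z = c * Vm B' 0 (u * z)) :
    E1Dw B Z (fun z => a * σ (u * z)) = |u⁻¹| * a ^ 3 * E1Dw B' (Z * c / a ^ 2) σ := by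
  have hcube : ∫ z, (a * σ (u * z)) ^ 3 = a ^ 3 * (|u⁻¹| * ∫ w, σ w ^ 3) := by
    simp only [mul_pow]
    rw [integral_const_mul, Measure.integral_comp_mul_left (fun w => σ w ^ 3), smul_eq_mul]
  have hpot : ∫ z, Vm B 0 z * (a * σ (u * z)) = c * a * (|u⁻¹| * ∫ w, Vm B' 0 w * σ w) := by
    have hpoint : ∀ z, Vm B 0 z * (a * σ (u * z)) = c * a * (Vm B' 0 (u * z) * σ (u * z)) :=
      fun z => by rw [hV]; ring
    simp_rw [hpoint]
    rw [integral_const_mul, Measure.integral_comp_mul_left (fun w => Vm B' 0 w * σ w),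
      smul_eq_mul]
  rw [E1Dw, E1Dw, hcube, hpot]
  field_simp

lemma E1Dw_rescale {Z B : ℝ} (hZ : 0 < Z) (hB : 0 < B) (σ : ℝ → ℝ) :
    E1Dw B Z (fun z => √Z * B ^ ((1 : ℝ) / 4) * σ (√B * z))
      = Z ^ ((3 : ℝ) / 2) * B ^ ((1 : ℝ) / 4) * E1Dw 1 1 σ := by
  set u := √B
  set b := B ^ ((1 : ℝ) / 4)
  set a := √Z * b
  have hu : 0 < u := Real.sqrt_pos.2 hB
  have hb : b ^ 2 = u := by
    rw [← Real.rpow_natCast, ← Real.rpow_mul hB.le]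
    simp only [u, Real.sqrt_eq_rpow]
    norm_num
  have ha2 : a ^ 2 = Z * u := by rw [mul_pow, Real.sq_sqrt hZ.le, hb]
  have hC : Z ^ ((3 : ℝ) / 2) * b = |u⁻¹| * a ^ 3 := by
    rw [abs_of_pos (inv_pos.2 hu), pow_succ, ha2, show (3 : ℝ) / 2 = 1 + 1 / 2 by norm_num,
      Real.rpow_add hZ, Real.rpow_one, ← Real.sqrt_eq_rpow]
    field_simp
    rfl
  rw [E1Dw_comp_mul σ (by positivity) (Vm_eq_sqrt_mul_Vm_one hB 0), hC, ha2,
    div_self (by positivity)]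

open Pointwise in
lemma E1Dw_energies_eq_smul {Z B : ℝ} (hZ : 0 < Z) (hB : 0 < B) :
    {e | ∃ ρ, Adm1w B ρ ∧ e = E1Dw B Z ρ}
      = (Z ^ ((3 : ℝ) / 2) * B ^ ((1 : ℝ) / 4)) • {e | ∃ σ, Adm1w 1 σ ∧ e = E1Dw 1 1 σ} := by
  set u := √B
  set a := √Z * B ^ ((1 : ℝ) / 4)
  have hu : 0 < u := Real.sqrt_pos.2 hB
  have ha : 0 < a := by positivity
  have hV : ∀ z, Vm B 0 z = u * Vm 1 0 (u * z) := Vm_eq_sqrt_mul_Vm_one hB 0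
  have hV' : ∀ w, Vm 1 0 w = u⁻¹ * Vm B 0 (u⁻¹ * w) := fun w => by
    rw [hV, ← mul_assoc, inv_mul_cancel₀ hu.ne', one_mul, mul_inv_cancel_left₀ hu.ne']
  ext e
  constructor
  · rintro ⟨ρ, hρ, rfl⟩
    set σ : ℝ → ℝ := fun w => a⁻¹ * ρ (u⁻¹ * w)
    have hρσ : ρ = fun z => a * σ (u * z) := by
      ext z
      simp only [σ, inv_mul_cancel_left₀ hu.ne', mul_inv_cancel_left₀ ha.ne']
    have hσ : Adm1w 1 σ := hρ.comp_mul (inv_nonneg.2 ha.le) (inv_ne_zero hu.ne') hV'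
    exact Set.mem_smul_set.2 ⟨E1Dw 1 1 σ, ⟨σ, hσ, rfl⟩,
      by rw [smul_eq_mul, ← E1Dw_rescale hZ hB, ← hρσ]⟩
  · intro he
    obtain ⟨_, ⟨σ, hσ, rfl⟩, rfl⟩ := Set.mem_smul_set.1 he
    exact ⟨_, hσ.comp_mul ha.le hu.ne' hV, (E1Dw_rescale hZ hB σ).symm⟩

/-- scaling of the 1D energy without repulsion:
`E^{1D}_w(Z,B) = Z^{3/2} B^{1/4} E^{1D}_w(1,1)`. -/
theorem stmt14 (Z B : ℝ) (hZ : 0 < Z) (hB : 0 < B) :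
    E1DwinfW Z B = Z ^ ((3 : ℝ) / 2) * B ^ ((1 : ℝ) / 4) * E1DwinfW 1 1 := by
  rw [E1DwinfW, E1DwinfW, E1Dw_energies_eq_smul hZ hB, Real.sInf_smul_of_nonneg (by positivity),
    smul_eq_mul]

end
end

section
/- For every z ∈ ℝ one has V_{0,0}^1(z) ≤ min{ 1/|z| , √π / 2 } (with the convention 1/|0| = +∞, i.e. V_{0,0}^1(0) ≤ √π/2). -/
open MeasureTheory Real ENNReal

noncomputable section

/-!
The Coulomb kernel depends on the two horizontal positions only through their difference, so
`V_{0,0}^1(z)` is the pairing of `u ↦ 1 / |(u, z)|` with the self-convolution of `|φ_0|²`.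
Gaussians convolve to Gaussians with added variances, so this self-convolution is the
probability density `(4π)⁻¹ e^{-|u|²/4}`. Bounding the kernel by `1 / |z|` gives the first bound;
bounding it by `1 / |u|` and integrating in polar coordinates,
`∫ (4π)⁻¹ e^{-|u|²/4} / |u| du = ½ ∫₀^∞ e^{-r²/4} dr = √π / 2`, gives the second.
All estimates are made for lower Lebesgue integrals, which need no integrability, and are
transferred to the Bochner integral `Vmn` through `‖∫ f‖ₑ ≤ ∫⁻ ‖f‖ₑ`.
-/

section

variable {G : Type*} [MeasurableSpace G] [AddGroup G] [MeasurableAdd₂ G] [MeasurableNeg G]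
  {μ : Measure G} [SFinite μ] [μ.IsAddLeftInvariant]

theorem lintegral_lintegral_mul_mul_comp_add {f g k : G → ℝ≥0∞}
    (hf : Measurable f) (hg : Measurable g) (hk : Measurable k) :
    ∫⁻ x, ∫⁻ y, f x * g y * k (x + y) ∂μ ∂μ = ∫⁻ u, (f ⋆ₗ[μ] g) u * k u ∂μ :=
  calc ∫⁻ x, ∫⁻ y, f x * g y * k (x + y) ∂μ ∂μ
      = ∫⁻ x, ∫⁻ u, f x * g (-x + u) * k u ∂μ ∂μ := by
        refine lintegral_congr fun x => ?_
        rw [← lintegral_add_left_eq_self _ (-x)]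
        simp only [add_neg_cancel_left]
    _ = ∫⁻ u, ∫⁻ x, f x * g (-x + u) * k u ∂μ ∂μ := lintegral_lintegral_swap (by fun_prop)
    _ = ∫⁻ u, (f ⋆ₗ[μ] g) u * k u ∂μ :=
        lintegral_congr fun u => lintegral_mul_const _ (by fun_prop)

end

theorem Real.le_of_enorm_le_ofReal {r c : ℝ} (hc : 0 ≤ c) (h : ‖r‖ₑ ≤ ENNReal.ofReal c) :
    r ≤ c :=
  (le_abs_self r).trans ((ENNReal.ofReal_le_ofReal_iff hc).mp (Real.enorm_eq_ofReal_abs r ▸ h))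

theorem integral_exp_neg_mul_norm_sq {b : ℝ} (hb : 0 < b) :
    ∫ x : ℂ, rexp (-b * ‖x‖ ^ 2) = π / b := by
  convert Complex.integral_exp_neg_mul_rpow one_le_two hb using 1
  · simp only [← Real.rpow_natCast, Nat.cast_ofNat]
  · norm_num [Real.rpow_neg_one, div_eq_mul_inv]

theorem lintegral_exp_neg_mul_norm_sub_sq {b : ℝ} (hb : 0 < b) (c : ℂ) :
    ∫⁻ x : ℂ, ENNReal.ofReal (rexp (-b * ‖x - c‖ ^ 2)) = ENNReal.ofReal (π / b) := by
  have h := integral_exp_neg_mul_norm_sq hb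
  rw [lintegral_sub_right_eq_self (fun x => ENNReal.ofReal (rexp (-b * ‖x‖ ^ 2))) c,
    ← ofReal_integral_eq_lintegral_ofReal, h]
  · exact Integrable.of_integral_ne_zero (by rw [h]; positivity)
  · exact ae_of_all _ fun x => (exp_pos _).le

/-- The centred Gaussian density on `ℂ ≃ ℝ²` with variance `s` in each coordinate;
`phiSq 1 0` is `planeGaussian 1` read through `ℂ ≃ ℝ × ℝ`. -/
def planeGaussian (s : ℝ) (x : ℂ) : ℝ := (2 * π * s)⁻¹ * rexp (-‖x‖ ^ 2 / (2 * s))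

theorem planeGaussian_nonneg {s : ℝ} (hs : 0 ≤ s) (x : ℂ) : 0 ≤ planeGaussian s x := by
  unfold planeGaussian; positivity

theorem continuous_planeGaussian (s : ℝ) : Continuous (planeGaussian s) := by
  unfold planeGaussian; fun_prop

theorem planeGaussian_neg (s : ℝ) (x : ℂ) : planeGaussian s (-x) = planeGaussian s x := by
  simp only [planeGaussian, norm_neg]

theorem lintegral_planeGaussian {s : ℝ} (hs : 0 < s) :
    ∫⁻ x, ENNReal.ofReal (planeGaussian s x) = 1 := by
  have h : ∀ x : ℂ, planeGaussian s x = (2 * π * s)⁻¹ * rexp (-(2 * s)⁻¹ * ‖x - 0‖ ^ 2) := by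
    intro x
    rw [planeGaussian, sub_zero]
    ring_nf
  simp_rw [h, ENNReal.ofReal_mul (by positivity : (0 : ℝ) ≤ (2 * π * s)⁻¹)]
  rw [lintegral_const_mul' _ _ ENNReal.ofReal_ne_top,
    lintegral_exp_neg_mul_norm_sub_sq (by positivity), ← ENNReal.ofReal_mul (by positivity)]
  field_simp
  exact ENNReal.ofReal_one

-- Completing the square in `y`.
theorem planeGaussian_mul_planeGaussian {s t : ℝ} (hs : 0 < s) (ht : 0 < t) (u y : ℂ) :
    planeGaussian s y * planeGaussian t (-y + u) =
      planeGaussian (s + t) u * ((s + t) / (2 * π * s * t)) *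
        rexp (-((s + t) / (2 * s * t)) * ‖y - (s / (s + t) : ℝ) • u‖ ^ 2) := by
  have hexp : -‖y‖ ^ 2 / (2 * s) + -‖-y + u‖ ^ 2 / (2 * t) =
      -‖u‖ ^ 2 / (2 * (s + t)) + -((s + t) / (2 * s * t)) * ‖y - (s / (s + t) : ℝ) • u‖ ^ 2 := by
    simp only [Complex.sq_norm, Complex.normSq_apply, Complex.sub_re, Complex.sub_im,
      Complex.add_re, Complex.add_im, Complex.neg_re, Complex.neg_im, Complex.real_smul,
      Complex.re_ofReal_mul, Complex.im_ofReal_mul]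
    field_simp
    ring
  calc planeGaussian s y * planeGaussian t (-y + u)
      = (2 * π * s)⁻¹ * (2 * π * t)⁻¹ *
          rexp (-‖y‖ ^ 2 / (2 * s) + -‖-y + u‖ ^ 2 / (2 * t)) := by
        rw [planeGaussian, planeGaussian, exp_add]; ring
    _ = _ := by
        rw [hexp, exp_add, planeGaussian]
        field_simp

theorem planeGaussian_lconvolution {s t : ℝ} (hs : 0 < s) (ht : 0 < t) :
    (fun x => ENNReal.ofReal (planeGaussian s x)) ⋆ₗ (fun x => ENNReal.ofReal (planeGaussian t x))
      = fun x => ENNReal.ofReal (planeGaussian (s + t) x) := by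
  ext u
  have hb : 0 < (s + t) / (2 * s * t) := by positivity
  have hc : 0 ≤ planeGaussian (s + t) u * ((s + t) / (2 * π * s * t)) :=
    mul_nonneg (planeGaussian_nonneg (by positivity) u) (by positivity)
  simp only [lconvolution_def, ← ENNReal.ofReal_mul (planeGaussian_nonneg hs.le _),
    planeGaussian_mul_planeGaussian hs ht, ENNReal.ofReal_mul hc]
  rw [lintegral_const_mul' _ _ ENNReal.ofReal_ne_top, lintegral_exp_neg_mul_norm_sub_sq hb,
    ← ENNReal.ofReal_mul hc]
  congr 1
  field_simp

theorem integral_planeGaussian_mul_norm_inv {s : ℝ} (hs : 0 < s) :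
    ∫ x : ℂ, planeGaussian s x * ‖x‖⁻¹ = √(π / (2 * s)) := by
  have hfun : ∀ x : ℂ, planeGaussian s x * ‖x‖⁻¹ =
      (2 * π * s)⁻¹ * (‖x‖ ^ (-1 : ℝ) * rexp (-(2 * s)⁻¹ * ‖x‖ ^ (2 : ℝ))) := by
    intro x
    rw [planeGaussian, Real.rpow_neg_one, Real.rpow_two]
    ring_nf
  simp_rw [hfun, integral_const_mul, Complex.integral_rpow_mul_exp_neg_mul_rpow one_le_two
    (by norm_num : (-2 : ℝ) < -1) (by positivity : 0 < (2 * s)⁻¹)]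
  norm_num [Real.Gamma_one_half_eq]
  rw [Real.rpow_neg (by positivity), ← Real.sqrt_eq_rpow, ← Real.sqrt_inv,
    Real.sqrt_div' _ (by positivity : (0 : ℝ) ≤ 2 * s)]
  field_simp
  exact Real.sq_sqrt (by positivity)

theorem lintegral_planeGaussian_mul_norm_inv {s : ℝ} (hs : 0 < s) :
    ∫⁻ x : ℂ, ENNReal.ofReal (planeGaussian s x) * ENNReal.ofReal ‖x‖⁻¹ =
      ENNReal.ofReal √(π / (2 * s)) := by
  have h := integral_planeGaussian_mul_norm_inv hs
  simp_rw [← ENNReal.ofReal_mul (planeGaussian_nonneg hs.le _)]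
  rw [← ofReal_integral_eq_lintegral_ofReal, h]
  · exact Integrable.of_integral_ne_zero (by rw [h]; positivity)
  · exact ae_of_all _ fun x => mul_nonneg (planeGaussian_nonneg hs.le x) (by positivity)

/-- The Coulomb interaction `1 / |(u, z)|` of two points of `ℂ × ℝ ≃ ℝ³` with horizontal offset
`u` and vertical offset `z`. -/
def coulombKernel (z : ℝ) (u : ℂ) : ℝ := (√(‖u‖ ^ 2 + z ^ 2))⁻¹

theorem coulombKernel_nonneg (z : ℝ) (u : ℂ) : 0 ≤ coulombKernel z u :=
  inv_nonneg.mpr (Real.sqrt_nonneg _)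

theorem coulombKernel_le_inv_abs {z : ℝ} (hz : z ≠ 0) (u : ℂ) : coulombKernel z u ≤ |z|⁻¹ :=
  inv_anti₀ (abs_pos.mpr hz) (Real.abs_le_sqrt (by nlinarith [sq_nonneg ‖u‖]))

theorem coulombKernel_le_norm_inv (z : ℝ) {u : ℂ} (hu : u ≠ 0) : coulombKernel z u ≤ ‖u‖⁻¹ :=
  inv_anti₀ (norm_pos_iff.mpr hu) (Real.le_sqrt_of_sq_le (by nlinarith [sq_nonneg z]))

theorem lintegral_planeGaussian_mul_coulombKernel_le_inv_abs {s z : ℝ} (hs : 0 < s)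
    (hz : z ≠ 0) :
    ∫⁻ u : ℂ, ENNReal.ofReal (planeGaussian s u) * ENNReal.ofReal (coulombKernel z u) ≤
      ENNReal.ofReal |z|⁻¹ :=
  calc _ ≤ ∫⁻ u : ℂ, ENNReal.ofReal (planeGaussian s u) * ENNReal.ofReal |z|⁻¹ :=
        lintegral_mono fun u => by gcongr; exact coulombKernel_le_inv_abs hz u
    _ = ENNReal.ofReal |z|⁻¹ := by
        rw [lintegral_mul_const' _ _ ENNReal.ofReal_ne_top, lintegral_planeGaussian hs, one_mul]

theorem lintegral_planeGaussian_mul_coulombKernel_le {s : ℝ} (hs : 0 < s) (z : ℝ) :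
    ∫⁻ u : ℂ, ENNReal.ofReal (planeGaussian s u) * ENNReal.ofReal (coulombKernel z u) ≤
      ENNReal.ofReal √(π / (2 * s)) :=
  calc _ ≤ ∫⁻ u : ℂ, ENNReal.ofReal (planeGaussian s u) * ENNReal.ofReal ‖u‖⁻¹ := by
        refine lintegral_mono_ae ?_
        filter_upwards [compl_mem_ae_iff.mpr (measure_singleton (0 : ℂ))] with u hu
        gcongr
        exact coulombKernel_le_norm_inv z hu
    _ = ENNReal.ofReal √(π / (2 * s)) := lintegral_planeGaussian_mul_norm_inv hs

theorem Vmn_one_zero_zero_eq_integral (z : ℝ) :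
    Vmn 1 0 0 z =
      ∫ x : ℂ, ∫ y : ℂ, planeGaussian 1 x * planeGaussian 1 y * coulombKernel z (x - y) := by
  set e := Complex.measurableEquivRealProd
  have hphi : ∀ x : ℂ, phiSq 1 0 (e x) = planeGaussian 1 x := by
    intro x
    simp only [phiSq, planeGaussian, e, Complex.measurableEquivRealProd_apply, Complex.sq_norm,
      Complex.normSq_apply]
    ring_nf
  have hnorm : ∀ x y : ℂ,
      normx ((e x).1 - (e y).1, (e x).2 - (e y).2) z = √(‖x - y‖ ^ 2 + z ^ 2) := by
    intro x y
    rw [Complex.sq_norm, Complex.normSq_apply]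
    simp only [normx, e, Complex.measurableEquivRealProd_apply, Complex.sub_re, Complex.sub_im, sq]
  have he : MeasurePreserving e := Complex.volume_preserving_equiv_real_prod
  rw [Vmn, ← he.integral_comp']
  refine integral_congr_ae (ae_of_all _ fun x => ?_)
  dsimp only
  rw [← he.integral_comp']
  simp only [hphi, hnorm, coulombKernel, div_eq_mul_inv]

theorem enorm_Vmn_one_zero_zero_le (z : ℝ) :
    ‖Vmn 1 0 0 z‖ₑ ≤
      ∫⁻ u : ℂ, ENNReal.ofReal (planeGaussian 2 u) * ENNReal.ofReal (coulombKernel z u) := by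
  set g : ℂ → ℝ≥0∞ := fun x => ENNReal.ofReal (planeGaussian 1 x)
  set k : ℂ → ℝ≥0∞ := fun u => ENNReal.ofReal (coulombKernel z u)
  have hg : Measurable g := (continuous_planeGaussian 1).measurable.ennreal_ofReal
  have hk : Measurable k := by unfold k coulombKernel; fun_prop
  have henorm : ∀ x y : ℂ,
      ‖planeGaussian 1 x * planeGaussian 1 (-y) * coulombKernel z (x - -y)‖ₑ
        = g x * g y * k (x + y) := by
    intro x y
    have hx := planeGaussian_nonneg zero_le_one x
    have hy := planeGaussian_nonneg zero_le_one y
    rw [planeGaussian_neg, sub_neg_eq_add,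
      Real.enorm_eq_ofReal (mul_nonneg (mul_nonneg hx hy) (coulombKernel_nonneg z _)),
      ENNReal.ofReal_mul (mul_nonneg hx hy), ENNReal.ofReal_mul hx]
  rw [Vmn_one_zero_zero_eq_integral]
  calc _ ≤ ∫⁻ x, ‖∫ y, planeGaussian 1 x * planeGaussian 1 y * coulombKernel z (x - y)‖ₑ :=
        enorm_integral_le_lintegral_enorm _
    _ ≤ ∫⁻ x, ∫⁻ y, ‖planeGaussian 1 x * planeGaussian 1 y * coulombKernel z (x - y)‖ₑ :=
        lintegral_mono fun x => enorm_integral_le_lintegral_enorm _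
    _ = ∫⁻ x, ∫⁻ y, g x * g y * k (x + y) := by
        refine lintegral_congr fun x => ?_
        rw [← lintegral_neg_eq_self]
        simp only [henorm]
    _ = ∫⁻ u, (g ⋆ₗ g) u * k u := lintegral_lintegral_mul_mul_comp_add hg hg hk
    _ = _ := by rw [planeGaussian_lconvolution one_pos one_pos, one_add_one_eq_two]

/-- pointwise bound `V_{0,0}¹(z) ≤ min{1/|z|, √π/2}`. -/
theorem stmt16 (z : ℝ) :
    Vmn 1 0 0 z ≤ Real.sqrt π / 2 ∧ (z ≠ 0 → Vmn 1 0 0 z ≤ 1 / |z|) := by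
  have hV := enorm_Vmn_one_zero_zero_le z
  have hsqrt : √(π / (2 * 2)) = √π / 2 := by
    rw [show π / (2 * 2) = π / 2 ^ 2 by norm_num, Real.sqrt_div' _ (by norm_num),
      Real.sqrt_sq zero_le_two]
  refine ⟨Real.le_of_enorm_le_ofReal (by positivity) ?_, fun hz => ?_⟩
  · exact hV.trans (hsqrt ▸ lintegral_planeGaussian_mul_coulombKernel_le two_pos z)
  · rw [one_div]
    exact Real.le_of_enorm_le_ofReal (by positivity)
      (hV.trans (lintegral_planeGaussian_mul_coulombKernel_le_inv_abs two_pos hz))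

end
end
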